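/- Every t-layer ReLU-activated decoder is a spline of degree 3^t: if δ_t = φ_t ∘ β_t ∘ φ_{t−1} ∘ β_{t−1} ∘ ⋯ ∘ φ_1 ∘ β_1 : ℝ^{n×p} → ℝ^{n_{t+1}×p}, where each β_i is a multihead ReLU masked attention module and each φ_i is a ReLU feed-forward neural network applied columnwise, then δ_t is a matrix-valued spline of degree 3^t. -/

import Mathlib

noncomputable section

open Matrix

/-- The rectified linear unit. -/
def relu (x : ℝ) : ℝ := max x 0

/-- Entrywise ReLU of a matrix. -/
def matRelu {a b : ℕ} (M : Matrix (Fin a) (Fin b) ℝ) : Matrix (Fin a) (Fin b) ℝ :=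
  Matrix.of fun i j => relu (M i j)

/-- A continuous function `f : ℝ^ι → ℝ` is a (polynomial) spline of degree `k` if there are
polynomials `π_1, …, π_b`, each of total degree at most `k`, such that on every (nonempty) cell
of the induced semialgebraic sign partition, `f` agrees with a polynomial of degree at most `k`. -/
def IsSpline (ι : Type) [Fintype ι] (k : ℕ) (f : (ι → ℝ) → ℝ) : Prop :=
  Continuous f ∧
  ∃ (b : ℕ) (π : Fin b → MvPolynomial ι ℝ),
    (∀ i, (π i).totalDegree ≤ k) ∧
    ∀ θ : Fin b → SignType,
      ∃ ξ : MvPolynomial ι ℝ, ξ.totalDegree ≤ k ∧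
        ∀ x : ι → ℝ, (∀ i, SignType.sign (MvPolynomial.eval x (π i)) = θ i) →
          f x = MvPolynomial.eval x ξ

/-- A matrix-variate, matrix-valued function is a spline of degree `k` if each coordinate
function, regarded as a function of the entries of the input matrix, is a spline of degree `k`. -/
def IsMatrixSpline {n p m q : ℕ} (k : ℕ)
    (f : Matrix (Fin n) (Fin p) ℝ → Matrix (Fin m) (Fin q) ℝ) : Prop :=
  ∀ (i : Fin m) (j : Fin q),
    IsSpline (Fin n × Fin p) k (fun x => f (Matrix.of fun a b => x (a, b)) i j)

/-- The ReLU-activated masked attention module: the score matrix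
`(A_K X + B_K)ᵀ (A_Q X + B_Q)` is ReLU'd on its upper-triangular part (`i ≤ j`) and the
strictly lower-triangular entries (`i > j`) are set to `0`, before multiplying by the values. -/
def maskedAttention {n p d m : ℕ}
    (AQ AK : Matrix (Fin d) (Fin n) ℝ) (AV : Matrix (Fin m) (Fin n) ℝ)
    (BQ BK : Matrix (Fin d) (Fin p) ℝ) (BV : Matrix (Fin m) (Fin p) ℝ)
    (X : Matrix (Fin n) (Fin p) ℝ) : Matrix (Fin m) (Fin p) ℝ :=
  (AV * X + BV) *
    Matrix.of (fun i j : Fin p =>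
      if i ≤ j then relu (((AK * X + BK)ᵀ * (AQ * X + BQ)) i j) else 0)

/-- An `h`-headed ReLU masked attention module: `h` masked attention modules stacked
vertically, giving a map `ℝ^{n×p} → ℝ^{hm×p}`. -/
def multiheadMaskedAttention {n p d m h : ℕ}
    (AQ AK : Fin h → Matrix (Fin d) (Fin n) ℝ) (AV : Fin h → Matrix (Fin m) (Fin n) ℝ)
    (BQ BK : Fin h → Matrix (Fin d) (Fin p) ℝ) (BV : Fin h → Matrix (Fin m) (Fin p) ℝ)
    (X : Matrix (Fin n) (Fin p) ℝ) : Matrix (Fin (h * m)) (Fin p) ℝ :=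
  Matrix.of fun i j =>
    maskedAttention (AQ (finProdFinEquiv.symm i).1) (AK (finProdFinEquiv.symm i).1)
      (AV (finProdFinEquiv.symm i).1) (BQ (finProdFinEquiv.symm i).1)
      (BK (finProdFinEquiv.symm i).1) (BV (finProdFinEquiv.symm i).1) X
      (finProdFinEquiv.symm i).2 j

/-- ReLU feed-forward neural networks `φ(x) = A_{l+1} σ_l A_l ⋯ σ_1 A_1 x + b_{l+1}`, where
`σ_i(x) = ReLU(x + b_i)` coordinatewise: the base case is an affine map, and each additional
layer precomposes with `x ↦ ReLU(A x + b)`. -/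
inductive IsNN : ∀ {a b : ℕ}, ((Fin a → ℝ) → (Fin b → ℝ)) → Prop
  | affine {a b : ℕ} (A : Matrix (Fin b) (Fin a) ℝ) (c : Fin b → ℝ) :
      IsNN (fun x => A.mulVec x + c)
  | layer {a b c : ℕ} (A : Matrix (Fin b) (Fin a) ℝ) (v : Fin b → ℝ)
      {g : (Fin b → ℝ) → (Fin c → ℝ)} (hg : IsNN g) :
      IsNN (fun x => g (fun i => relu (A.mulVec x i + v i)))

/-- Apply a map `φ : ℝ^a → ℝ^c` columnwise to a matrix `X ∈ ℝ^{a×p}`. -/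
def colwise {a c p : ℕ} (φ : (Fin a → ℝ) → (Fin c → ℝ))
    (X : Matrix (Fin a) (Fin p) ℝ) : Matrix (Fin c) (Fin p) ℝ :=
  Matrix.of fun i j => φ (fun r => X r j) i

/-- A decoder block: a multihead ReLU masked attention module followed by a ReLU feed-forward
neural network applied columnwise. -/
def IsDecoderBlock {n r p : ℕ}
    (f : Matrix (Fin n) (Fin p) ℝ → Matrix (Fin r) (Fin p) ℝ) : Prop :=
  ∃ (d m h : ℕ)
    (AQ AK : Fin h → Matrix (Fin d) (Fin n) ℝ) (AV : Fin h → Matrix (Fin m) (Fin n) ℝ)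
    (BQ BK : Fin h → Matrix (Fin d) (Fin p) ℝ) (BV : Fin h → Matrix (Fin m) (Fin p) ℝ)
    (φ : (Fin (h * m) → ℝ) → (Fin r → ℝ)), IsNN φ ∧
      f = fun X => colwise φ (multiheadMaskedAttention AQ AK AV BQ BK BV X)

/-- A `t`-layer decoder: the composition of `t` decoder blocks. -/
inductive IsDecoder {p : ℕ} : ∀ {n r : ℕ}, ℕ →
    (Matrix (Fin n) (Fin p) ℝ → Matrix (Fin r) (Fin p) ℝ) → Prop
  | block {n r : ℕ} (f : Matrix (Fin n) (Fin p) ℝ → Matrix (Fin r) (Fin p) ℝ)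
      (hf : IsDecoderBlock f) : IsDecoder 1 f
  | comp {n s r : ℕ} (t : ℕ) (f : Matrix (Fin n) (Fin p) ℝ → Matrix (Fin s) (Fin p) ℝ)
      (g : Matrix (Fin s) (Fin p) ℝ → Matrix (Fin r) (Fin p) ℝ)
      (hf : IsDecoderBlock f) (hg : IsDecoder t g) : IsDecoder (t + 1) (g ∘ f)


/-
Splines of a fixed space are closed under sums, under products (degrees add), under ReLU and
under composition (degrees multiply). Affine maps are splines of degree 1, so a ReLU network is
a spline of degree 1, while each entry of a masked attention head is a sum of products of an
affine value entry with the ReLU of a quadratic score, a spline of degree 3. A decoder block is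
thus a spline of degree `1 * 3`, and `t` blocks compose to a spline of degree `3 ^ t`.
-/

open MvPolynomial

lemma continuous_relu : Continuous relu := continuous_id.max continuous_const

namespace MvPolynomial

variable {R σ τ : Type*} [CommSemiring R]

lemma eval_bind₁ (x : τ → R) (g : σ → MvPolynomial τ R) (φ : MvPolynomial σ R) :
    eval x (bind₁ g φ) = eval (fun i => eval x (g i)) φ :=
  eval₂Hom_bind₁ (RingHom.id R) x g φ

lemma totalDegree_bind₁_le {k : ℕ} (g : σ → MvPolynomial τ R) (hg : ∀ i, (g i).totalDegree ≤ k)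
    (φ : MvPolynomial σ R) : (bind₁ g φ).totalDegree ≤ φ.totalDegree * k := by
  conv_lhs => rw [φ.as_sum]
  rw [map_sum]
  refine totalDegree_finsetSum_le fun v hv => ?_
  rw [bind₁_monomial]
  refine (totalDegree_mul _ _).trans ?_
  rw [totalDegree_C, zero_add]
  refine (totalDegree_finsetProd _ _).trans ?_
  calc ∑ i ∈ v.support, (g i ^ v i).totalDegree
      ≤ ∑ i ∈ v.support, v i * k :=
        Finset.sum_le_sum fun i _ => (totalDegree_pow _ _).trans (Nat.mul_le_mul_left _ (hg i))
    _ = (∑ i ∈ v.support, v i) * k := (Finset.sum_mul ..).symm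
    _ ≤ φ.totalDegree * k := Nat.mul_le_mul_right _ (le_totalDegree hv)

end MvPolynomial

section IsSpline

variable {ι : Type} [Fintype ι]

lemma IsSpline.of_fintype_partition {κ : Type} [Fintype κ] {k : ℕ} {f : (ι → ℝ) → ℝ}
    (hc : Continuous f) (π : κ → MvPolynomial ι ℝ) (hπ : ∀ i, (π i).totalDegree ≤ k)
    (hcell : ∀ θ : κ → SignType, ∃ ξ : MvPolynomial ι ℝ, ξ.totalDegree ≤ k ∧
      ∀ x, (∀ i, SignType.sign (eval x (π i)) = θ i) → f x = eval x ξ) :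
    IsSpline ι k f := by
  let e := Fintype.equivFin κ
  refine ⟨hc, Fintype.card κ, π ∘ e.symm, fun i => hπ _, fun θ => ?_⟩
  obtain ⟨ξ, hξ, hfξ⟩ := hcell (θ ∘ e)
  exact ⟨ξ, hξ, fun x hx => hfξ x fun i => by simpa using hx (e i)⟩

lemma IsSpline.congr {k : ℕ} {f g : (ι → ℝ) → ℝ} (hf : IsSpline ι k f) (hfg : ∀ x, f x = g x) :
    IsSpline ι k g :=
  funext hfg ▸ hf

lemma isSpline_eval {k : ℕ} {ξ : MvPolynomial ι ℝ} (hξ : ξ.totalDegree ≤ k) :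
    IsSpline ι k (fun x => eval x ξ) :=
  ⟨ξ.continuous_eval, 0, Fin.elim0, fun i => i.elim0, fun _ => ⟨ξ, hξ, fun _ _ => rfl⟩⟩

lemma isSpline_const (k : ℕ) (c : ℝ) : IsSpline ι k (fun _ => c) := by
  simpa using isSpline_eval (ι := ι) (k := k) (ξ := C c) (by simp)

lemma isSpline_apply (i : ι) : IsSpline ι 1 (fun x => x i) := by
  simpa using isSpline_eval (ι := ι) (ξ := X i) (totalDegree_X i).le

lemma IsSpline.add {k : ℕ} {f g : (ι → ℝ) → ℝ} (hf : IsSpline ι k f) (hg : IsSpline ι k g) :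
    IsSpline ι k (fun x => f x + g x) := by
  obtain ⟨hcf, _, π, hπ, hcellf⟩ := hf
  obtain ⟨hcg, _, ρ, hρ, hcellg⟩ := hg
  refine .of_fintype_partition (hcf.add hcg) (Sum.elim π ρ) (Sum.forall.2 ⟨hπ, hρ⟩) fun θ => ?_
  obtain ⟨ξ, hξ, hfξ⟩ := hcellf (θ ∘ Sum.inl)
  obtain ⟨ζ, hζ, hgζ⟩ := hcellg (θ ∘ Sum.inr)
  refine ⟨ξ + ζ, (totalDegree_add _ _).trans (max_le hξ hζ), fun x hx => ?_⟩
  rw [map_add, hfξ x fun i => hx (.inl i), hgζ x fun i => hx (.inr i)]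

lemma IsSpline.mul {k l : ℕ} {f g : (ι → ℝ) → ℝ} (hf : IsSpline ι k f) (hg : IsSpline ι l g) :
    IsSpline ι (k + l) (fun x => f x * g x) := by
  obtain ⟨hcf, _, π, hπ, hcellf⟩ := hf
  obtain ⟨hcg, _, ρ, hρ, hcellg⟩ := hg
  refine .of_fintype_partition (hcf.mul hcg) (Sum.elim π ρ)
    (Sum.forall.2 ⟨fun i => (hπ i).trans (k.le_add_right l),
      fun i => (hρ i).trans (l.le_add_left k)⟩) fun θ => ?_
  obtain ⟨ξ, hξ, hfξ⟩ := hcellf (θ ∘ Sum.inl)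
  obtain ⟨ζ, hζ, hgζ⟩ := hcellg (θ ∘ Sum.inr)
  refine ⟨ξ * ζ, (totalDegree_mul _ _).trans (Nat.add_le_add hξ hζ), fun x hx => ?_⟩
  rw [map_mul, hfξ x fun i => hx (.inl i), hgζ x fun i => hx (.inr i)]

lemma IsSpline.const_mul {k : ℕ} {f : (ι → ℝ) → ℝ} (hf : IsSpline ι k f) (c : ℝ) :
    IsSpline ι k (fun x => c * f x) := by
  simpa using (isSpline_const 0 c).mul hf

lemma IsSpline.sum {k : ℕ} {κ : Type*} (s : Finset κ) {f : κ → (ι → ℝ) → ℝ}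
    (hf : ∀ i ∈ s, IsSpline ι k (f i)) : IsSpline ι k (fun x => ∑ i ∈ s, f i x) := by
  classical
  induction s using Finset.induction_on with
  | empty => simpa using isSpline_const k 0
  | insert a s has ih =>
    simp only [Finset.sum_insert has]
    exact (hf a (s.mem_insert_self a)).add (ih fun i hi => hf i (Finset.mem_insert_of_mem hi))

lemma isSpline_affine {κ : Type} [Fintype κ] (w : κ → ℝ) (e : κ → ι) (c : ℝ) :
    IsSpline ι 1 (fun x => ∑ s, w s * x (e s) + c) :=
  (IsSpline.sum _ fun s _ => (isSpline_apply (e s)).const_mul (w s)).add (isSpline_const 1 c)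

lemma isSpline_mulVec_add {κ : Type} (A : Matrix κ ι ℝ) (v : κ → ℝ) (i : κ) :
    IsSpline ι 1 (fun x => A.mulVec x i + v i) :=
  isSpline_affine (A i) id (v i)

/- Adding the cell polynomials of `f` to the partition makes the sign of `f` constant on each
new cell, where `relu ∘ f` is then either `0` or `f`. -/
lemma IsSpline.relu {k : ℕ} {f : (ι → ℝ) → ℝ} (hf : IsSpline ι k f) :
    IsSpline ι k (fun x => relu (f x)) := by
  obtain ⟨hc, b, π, hπ, hcell⟩ := hf
  choose Ξ hΞ hfΞ using hcell
  refine .of_fintype_partition (continuous_relu.comp hc) (Sum.elim π Ξ)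
    (Sum.forall.2 ⟨hπ, hΞ⟩) fun Θ => ?_
  set θ := Θ ∘ Sum.inl
  refine ⟨if Θ (.inr θ) = -1 then 0 else Ξ θ, by split_ifs <;> simp [hΞ θ], fun x hx => ?_⟩
  rw [hfΞ θ x fun i => hx (.inl i), ← hx (.inr θ)]
  split_ifs with hneg
  · exact max_eq_right (sign_eq_neg_one_iff.mp hneg).le
  · exact max_eq_left (not_lt.mp (mt sign_eq_neg_one_iff.mpr hneg))

/- On a cell of the partitions of the `g j`, each `g j` is a polynomial `Ξ Θ j`; substituting
these into the partition polynomials of `F` gives the remaining partition polynomials. -/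
lemma IsSpline.comp {κ : Type} [Fintype κ] {m k : ℕ} (hm : 1 ≤ m) {F : (κ → ℝ) → ℝ}
    {g : κ → (ι → ℝ) → ℝ} (hF : IsSpline κ m F) (hg : ∀ j, IsSpline ι k (g j)) :
    IsSpline ι (m * k) (fun x => F (fun j => g j x)) := by
  classical
  obtain ⟨hcF, bF, ρ, hρ, hcellF⟩ := hF
  choose hcg b π hπ hcellg using hg
  choose Ξ hΞ hgΞ using fun (Θ : (Σ j, Fin (b j)) → SignType) j => hcellg j fun s => Θ ⟨j, s⟩
  have hdeg (Θ) (φ : MvPolynomial κ ℝ) (hφ : φ.totalDegree ≤ m) :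
      (bind₁ (Ξ Θ) φ).totalDegree ≤ m * k :=
    (totalDegree_bind₁_le _ (hΞ Θ) φ).trans (Nat.mul_le_mul_right k hφ)
  refine .of_fintype_partition (hcF.comp (continuous_pi hcg))
    (Sum.elim (fun s : Σ j, Fin (b j) => π s.1 s.2) fun q : _ × Fin bF => bind₁ (Ξ q.1) (ρ q.2))
    (Sum.forall.2 ⟨fun s => (hπ s.1 s.2).trans (Nat.le_mul_of_pos_left k hm),
      fun q => hdeg q.1 _ (hρ q.2)⟩) fun Θ' => ?_
  set Θ := Θ' ∘ Sum.inl
  obtain ⟨ζ, hζ, hFζ⟩ := hcellF fun i => Θ' (.inr (Θ, i))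
  refine ⟨bind₁ (Ξ Θ) ζ, hdeg Θ ζ hζ, fun x hx => ?_⟩
  have hgx : (fun j => g j x) = fun j => eval x (Ξ Θ j) :=
    funext fun j => hgΞ Θ j x fun s => hx (.inl ⟨j, s⟩)
  rw [hgx, eval_bind₁]
  exact hFζ _ fun i => by rw [← eval_bind₁]; exact hx (.inr (Θ, i))

end IsSpline

lemma IsMatrixSpline.comp {n p s q r : ℕ} {k l : ℕ} (hk : 1 ≤ k)
    {g : Matrix (Fin s) (Fin q) ℝ → Matrix (Fin r) (Fin q) ℝ}
    {f : Matrix (Fin n) (Fin p) ℝ → Matrix (Fin s) (Fin q) ℝ}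
    (hg : IsMatrixSpline k g) (hf : IsMatrixSpline l f) : IsMatrixSpline (k * l) (g ∘ f) :=
  fun i j => (hg i j).comp hk (g := fun q x => f (Matrix.of fun a b => x (a, b)) q.1 q.2)
    fun q => hf q.1 q.2

lemma IsNN.isSpline_apply {a c : ℕ} {φ : (Fin a → ℝ) → (Fin c → ℝ)} (hφ : IsNN φ) (i : Fin c) :
    IsSpline (Fin a) 1 (fun x => φ x i) := by
  induction hφ with
  | affine A v => exact isSpline_mulVec_add A v i
  | layer A v _ ih => simpa using (ih i).comp le_rfl fun j => (isSpline_mulVec_add A v j).relu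

lemma maskedAttention_isMatrixSpline {n p d m : ℕ}
    (AQ AK : Matrix (Fin d) (Fin n) ℝ) (AV : Matrix (Fin m) (Fin n) ℝ)
    (BQ BK : Matrix (Fin d) (Fin p) ℝ) (BV : Matrix (Fin m) (Fin p) ℝ) :
    IsMatrixSpline 3 (maskedAttention AQ AK AV BQ BK BV) := by
  intro i j
  have hterm (l : Fin p) : IsSpline (Fin n × Fin p) 3 fun x => (∑ s, AV i s * x (s, l) + BV i l) *
      if l ≤ j then relu (∑ s : Fin d,
        (∑ u, AK s u * x (u, l) + BK s l) * (∑ u, AQ s u * x (u, j) + BQ s j)) else 0 := by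
    refine IsSpline.mul (l := 2) (isSpline_affine (AV i) (·, l) (BV i l)) ?_
    split_ifs
    · exact (IsSpline.sum Finset.univ fun s _ =>
        (isSpline_affine (AK s) (·, l) _).mul (isSpline_affine (AQ s) (·, j) _)).relu
    · exact isSpline_const 2 0
  refine (IsSpline.sum Finset.univ fun l _ => hterm l).congr fun x => ?_
  simp only [maskedAttention, Matrix.mul_apply, Matrix.transpose_apply, Matrix.add_apply,
    Matrix.of_apply]

lemma IsDecoderBlock.isMatrixSpline {n r p : ℕ}
    {f : Matrix (Fin n) (Fin p) ℝ → Matrix (Fin r) (Fin p) ℝ} (hf : IsDecoderBlock f) :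
    IsMatrixSpline 3 f := by
  obtain ⟨d, m, h, AQ, AK, AV, BQ, BK, BV, φ, hφ, rfl⟩ := hf
  intro i j
  simpa [colwise, multiheadMaskedAttention] using (hφ.isSpline_apply i).comp le_rfl fun a =>
    maskedAttention_isMatrixSpline _ _ _ _ _ _ (finProdFinEquiv.symm a).2 j

/-- Every `t`-layer ReLU-activated decoder is a spline of degree `3^t`. -/
theorem decoder_is_spline (n r p t : ℕ)
    (f : Matrix (Fin n) (Fin p) ℝ → Matrix (Fin r) (Fin p) ℝ)
    (hf : IsDecoder t f) : IsMatrixSpline (3 ^ t) f := by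
  induction hf with
  | block f hf => simpa using hf.isMatrixSpline
  | comp t f g hf _ ih =>
    rw [pow_succ]
    exact ih.comp (Nat.one_le_pow _ _ three_pos) hf.isMatrixSpline
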